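/- arXiv:2007.07814 — 4 statements merged into one kernel-verified Lean document; each statement's English description precedes it below -/
import Mathlib

section
/- Suppose the fibres of the Riemannian submersion are totally umbilical with vanishing mean curvature field, i.e. N = 0. Then for all basic horizontal X, Y, Z, H and all vertical U, V, W, F: g(P*(X,Y)Z, H) = g(R^G(X',Y')Z', H')∘π + 2g(A_X Y, A_Z H) − g(A_Y Z, A_X H) + g(A_X Z, A_Y H) − (1/(n−1)) { g(X,H)[ S^G(Y',Z')∘π − 2Σ_i g(A_Y X_i, A_Z X_i) − Σ_j g(T_{U_j}Y, T_{U_j}Z) ] − g(Y,H)[ S^G(X',Z')∘π − 2Σ_i g(A_X X_i, A_Z X_i) − Σ_j g(T_{U_j}X, T_{U_j}Z) ] }, and g(P*(U,V)W, F) = g(R̂(U,V)W, F) + g(T_U W, T_V F) − g(T_V W, T_U F) − (1/(n−1)) { g(F,U)[ Ŝ(V,W) + Σ_i ( g((∇_{X_i}T)_V W, X_i) + g(A_{X_i}V, A_{X_i}W) ) ] − g(F,V)[ Ŝ(U,W) + Σ_i ( g((∇_{X_i}T)_U W, X_i) + g(A_{X_i}U, A_{X_i}W) ) ] }. -/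
/-!
An axiomatic (pointwise) formalization of the setting of O'Neill's fundamental
equations of a Riemannian submersion `π : (M,g) → (G,g')`.

`VF` stands for the vector fields on the total space `M` (evaluated at a point,
so that they form a real vector space); all scalar quantities (inner products,
curvatures, Ricci curvatures and scalar curvatures) are recorded through their
values.  O'Neill's fundamental equations (Theorem 1 of the paper), the Ricci
tensor relations (Proposition 1) and the scalar curvature relation
(Proposition 2) are part of the structure:

* `T`, `A` are O'Neill's tensors `T_E F = v∇_{vE} hF + h∇_{vE} vF` and
  `A_E F = v∇_{hE} hF + h∇_{hE} vF`;
* `covT E V W = (∇_E T)_V W`, `covA E X Y = (∇_E A)_X Y`, `covN E = ∇_E N`;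
* `Xi`, `Uj` form a π-compatible orthonormal frame (`Xi` horizontal,
  `Uj` vertical) and `N = ∑ j, T_{U_j} U_j` is the mean curvature field;
* `Rm X Y Z = R^M(X,Y)Z`, `RG X Y Z H = g'(R^G(X',Y')Z',H') ∘ π` (for basic
  fields, `X'` being the π-related field on `G`), `Rhat U V W F = ĝ(R̂(U,V)W,F)`;
* `SM`, `SG`, `Shat` are the Ricci tensors of `M`, `G` (pulled back) and the
  fibres, `Q` is the Ricci operator of `M`, and `rM`, `rG`, `rhat` the scalar
  curvatures, `normA2 = ‖A‖²`, `normT2 = ‖T‖²`.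
-/

structure OneillSetup (VF : Type*) [AddCommGroup VF] [Module ℝ VF] where
  /-- dimension of the total space `M` -/
  n : ℕ
  /-- the field is horizontal -/
  horizontal : VF → Prop
  /-- the field is vertical -/
  vertical : VF → Prop
  /-- the field is basic: horizontal and π-related to a field on `G` -/
  basic : VF → Prop
  basic_horizontal : ∀ X, basic X → horizontal X
  /-- the Riemannian metric `g` of `M` -/
  g : LinearMap.BilinForm ℝ VF
  g_symm : ∀ X Y, g X Y = g Y X
  /-- horizontal and vertical fields are orthogonal -/
  g_hv : ∀ X V, horizontal X → vertical V → g X V = 0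
  /-- O'Neill's tensor `T` -/
  T : VF → VF → VF
  /-- O'Neill's tensor `A` -/
  A : VF → VF → VF
  /-- `covT E V W = (∇_E T)_V W` -/
  covT : VF → VF → VF → VF
  /-- `covA E X Y = (∇_E A)_X Y` -/
  covA : VF → VF → VF → VF
  /-- size of the horizontal part of the frame -/
  p : ℕ
  /-- size of the vertical part of the frame -/
  q : ℕ
  /-- horizontal part `{X_i}` of a π-compatible orthonormal frame -/
  Xi : Fin p → VF
  Xi_horizontal : ∀ i, horizontal (Xi i)
  Xi_basic : ∀ i, basic (Xi i)
  /-- vertical part `{U_j}` of the frame -/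
  Uj : Fin q → VF
  Uj_vertical : ∀ j, vertical (Uj j)
  /-- the mean curvature vector field `N` -/
  N : VF
  N_def : N = ∑ j, T (Uj j) (Uj j)
  /-- `covN E = ∇_E N` -/
  covN : VF → VF
  /-- if `N` vanishes then so does its covariant derivative -/
  covN_zero : N = 0 → ∀ E, covN E = 0
  /-- the curvature of `M`: `Rm X Y Z = R^M(X,Y)Z` -/
  Rm : VF → VF → VF → VF
  /-- `RG X Y Z H = g'(R^G(X',Y')Z',H') ∘ π` on basic fields -/
  RG : VF → VF → VF → VF → ℝ
  /-- the curvature of the fibres: `Rhat U V W F = ĝ(R̂(U,V)W,F)` -/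
  Rhat : VF → VF → VF → VF → ℝ
  /-- the Ricci tensor of `M` -/
  SM : VF → VF → ℝ
  SM_symm : ∀ X Y, SM X Y = SM Y X
  /-- `SG X Y = S^G(X',Y') ∘ π` on basic fields -/
  SG : VF → VF → ℝ
  /-- the Ricci tensor of the fibres -/
  Shat : VF → VF → ℝ
  /-- the Ricci operator of `M`, `S^M(X,Y) = g(QX,Y)` -/
  Q : VF → VF
  Q_def : ∀ X Y, SM X Y = g (Q X) Y
  /-- the scalar curvature of `M` -/
  rM : ℝ
  /-- `r^G ∘ π` -/
  rG : ℝ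
  /-- the scalar curvature of the fibre -/
  rhat : ℝ
  /-- `‖A‖²` -/
  normA2 : ℝ
  /-- `‖T‖²` -/
  normT2 : ℝ
  /-- O'Neill's equation (1.3): totally horizontal curvature -/
  curv_hhhh : ∀ X Y Z H, basic X → basic Y → basic Z → basic H →
    g (Rm X Y Z) H = RG X Y Z H + 2 * g (A X Y) (A Z H)
      - g (A Y Z) (A X H) + g (A X Z) (A Y H)
  /-- O'Neill's equation (1.4) -/
  curv_hhhv : ∀ X Y Z V, horizontal X → horizontal Y → horizontal Z → vertical V →
    g (Rm X Y Z) V = -(g (covA Z X Y) V) - g (A X Y) (T V Z)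
      + g (A Y Z) (T V X) - g (A X Z) (T V Y)
  /-- O'Neill's equation (1.6) -/
  curv_hvhv : ∀ X V Y W, horizontal X → vertical V → horizontal Y → vertical W →
    g (Rm X V Y) W = g (covT X V W) Y - g (covA V X Y) W
      - g (T V X) (T W Y) + g (A X V) (A Y W)
  /-- O'Neill's equation (1.7) -/
  curv_vvvh : ∀ U V W X, vertical U → vertical V → vertical W → horizontal X →
    g (Rm U V W) X = g (covT U V W) X - g (covT V U W) X
  /-- O'Neill's equation (1.8): totally vertical curvature -/
  curv_vvvv : ∀ U V W F, vertical U → vertical V → vertical W → vertical F →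
    g (Rm U V W) F = Rhat U V W F + g (T U W) (T V F) - g (T V W) (T U F)
  /-- Proposition 1 (i): the Ricci tensor on vertical fields -/
  ricci_vv : ∀ U V, vertical U → vertical V →
    SM U V = Shat U V - g N (T U V)
      + ∑ i, (g (covT (Xi i) U V) (Xi i) + g (A (Xi i) U) (A (Xi i) V))
  /-- Proposition 1 (ii): the Ricci tensor on basic fields -/
  ricci_hh : ∀ X Y, basic X → basic Y →
    SM X Y = SG X Y + (1 / 2) * (g (covN X) Y + g (covN Y) X)
      - 2 * (∑ i, g (A X (Xi i)) (A Y (Xi i)))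
      - ∑ j, g (T (Uj j) X) (T (Uj j) Y)
  /-- Proposition 1 (iii): the mixed Ricci tensor -/
  ricci_vh : ∀ U X, vertical U → horizontal X →
    SM U X = g (covN U) X - (∑ j, g (covT (Uj j) (Uj j) U) X)
      + ∑ i, (g (covA (Xi i) (Xi i) X) U - 2 * g (A X (Xi i)) (T U (Xi i)))
  /-- Proposition 2: the scalar curvature relation -/
  scalar_eq : rM = rhat + rG - g N N - normA2 - normT2
      + 2 * ∑ i, g (covN (Xi i)) (Xi i)

namespace OneillSetup

variable {VF : Type*} [AddCommGroup VF] [Module ℝ VF]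

/-- The Weyl projective curvature tensor
`P*(X,Y)Z = R^M(X,Y)Z − (1/(n−1))[S^M(Y,Z)X − S^M(X,Z)Y]`. -/
noncomputable def Pstar (D : OneillSetup VF) (X Y Z : VF) : VF :=
  D.Rm X Y Z - (1 / ((D.n : ℝ) - 1)) • (D.SM Y Z • X - D.SM X Z • Y)

/-- The concircular curvature tensor
`C*(X,Y,Z,H) = g(R^M(X,Y)Z,H) − (r^M/(n(n−1)))[g(X,H)g(Y,Z) − g(Y,H)g(X,Z)]`. -/
noncomputable def Cstar (D : OneillSetup VF) (X Y Z H : VF) : ℝ :=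
  D.g (D.Rm X Y Z) H
    - D.rM / ((D.n : ℝ) * ((D.n : ℝ) - 1)) * (D.g X H * D.g Y Z - D.g Y H * D.g X Z)

/-- The conharmonic curvature tensor
`L*(X,Y,Z,H) = g(R^M(X,Y)Z,H) − (1/(n−2))[g(Y,Z)S^M(X,H) − g(X,Z)S^M(Y,H)
  + g(X,H)S^M(Y,Z) − g(Y,H)S^M(X,Z)]`. -/
noncomputable def Lstar (D : OneillSetup VF) (X Y Z H : VF) : ℝ :=
  D.g (D.Rm X Y Z) H
    - (1 / ((D.n : ℝ) - 2)) * (D.g Y Z * D.SM X H - D.g X Z * D.SM Y H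
        + D.g X H * D.SM Y Z - D.g Y H * D.SM X Z)

/-- The conformal (Weyl) curvature tensor
`V*(X,Y,Z,H) = g(R^M(X,Y)Z,H) − (1/(n−2))[g(X,H)S^M(Y,Z) − g(Y,H)S^M(X,Z)
  + g(Y,Z)S^M(X,H) − g(X,Z)S^M(Y,H)]
  + (r^M/((n−1)(n−2)))[g(X,H)g(Y,Z) − g(Y,H)g(X,Z)]`. -/
noncomputable def Vstar (D : OneillSetup VF) (X Y Z H : VF) : ℝ :=
  D.g (D.Rm X Y Z) H
    - (1 / ((D.n : ℝ) - 2)) * (D.g X H * D.SM Y Z - D.g Y H * D.SM X Z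
        + D.g Y Z * D.SM X H - D.g X Z * D.SM Y H)
    + D.rM / (((D.n : ℝ) - 1) * ((D.n : ℝ) - 2))
        * (D.g X H * D.g Y Z - D.g Y H * D.g X Z)

/-- The M-projective curvature tensor
`W*(X,Y)Z = R^M(X,Y)Z − (1/(2(n−1)))[S^M(Y,Z)X − S^M(X,Z)Y + g(Y,Z)QX − g(X,Z)QY]`. -/
noncomputable def Wstar (D : OneillSetup VF) (X Y Z : VF) : VF :=
  D.Rm X Y Z - (1 / (2 * ((D.n : ℝ) - 1))) •
    (D.SM Y Z • X - D.SM X Z • Y + D.g Y Z • D.Q X - D.g X Z • D.Q Y)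

/-- Abbreviation `Ric_h(E,F) = S^G(E',F')∘π + (1/2)(g(∇_E N,F) + g(∇_F N,E))
  − 2∑ᵢ g(A_E Xᵢ, A_F Xᵢ) − ∑ⱼ g(T_{Uⱼ}E, T_{Uⱼ}F)` for horizontal `E`, `F`. -/
noncomputable def RicH (D : OneillSetup VF) (E F : VF) : ℝ :=
  D.SG E F + (1 / 2) * (D.g (D.covN E) F + D.g (D.covN F) E)
    - 2 * (∑ i, D.g (D.A E (D.Xi i)) (D.A F (D.Xi i)))
    - ∑ j, D.g (D.T (D.Uj j) E) (D.T (D.Uj j) F)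

/-- The umbilical (`N = 0`) form of `RicH`. -/
noncomputable def RicHum (D : OneillSetup VF) (E F : VF) : ℝ :=
  D.SG E F - 2 * (∑ i, D.g (D.A E (D.Xi i)) (D.A F (D.Xi i)))
    - ∑ j, D.g (D.T (D.Uj j) E) (D.T (D.Uj j) F)

/-- Abbreviation `Ric_v(E,F) = Ŝ(E,F) − g(N, T_E F)
  + ∑ᵢ (g((∇_{Xᵢ}T)_E F, Xᵢ) + g(A_{Xᵢ}E, A_{Xᵢ}F))` for vertical `E`, `F`. -/
noncomputable def RicV (D : OneillSetup VF) (E F : VF) : ℝ :=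
  D.Shat E F - D.g D.N (D.T E F)
    + ∑ i, (D.g (D.covT (D.Xi i) E F) (D.Xi i) + D.g (D.A (D.Xi i) E) (D.A (D.Xi i) F))

/-- The umbilical (`N = 0`) form of `RicV`. -/
noncomputable def RicVum (D : OneillSetup VF) (E F : VF) : ℝ :=
  D.Shat E F
    + ∑ i, (D.g (D.covT (D.Xi i) E F) (D.Xi i) + D.g (D.A (D.Xi i) E) (D.A (D.Xi i) F))

/-- Abbreviation `Ric_m(V,E) = g(∇_V N, E) − ∑ⱼ g((∇_{Uⱼ}T)_{Uⱼ}V, E)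
  + ∑ᵢ (g((∇_{Xᵢ}A)_{Xᵢ}E, V) − 2g(A_E Xᵢ, T_V Xᵢ))` for vertical `V`,
  horizontal `E`. -/
noncomputable def RicM (D : OneillSetup VF) (V E : VF) : ℝ :=
  D.g (D.covN V) E - (∑ j, D.g (D.covT (D.Uj j) (D.Uj j) V) E)
    + ∑ i, (D.g (D.covA (D.Xi i) (D.Xi i) E) V - 2 * D.g (D.A E (D.Xi i)) (D.T V (D.Xi i)))

end OneillSetup

/-!
Pairing `P*(X,Y)Z` with `H` splits it into `g(R^M(X,Y)Z, H)` and Ricci terms.  On basic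
(resp. vertical) fields the former is O'Neill's equation (1.3) (resp. (1.8)) and the latter are
given by Proposition 1, in which `N = 0` removes both the `∇N` terms and `g(N, T_U V)`.
-/

namespace OneillSetup

variable {VF : Type*} [AddCommGroup VF] [Module ℝ VF] (D : OneillSetup VF)

theorem g_Pstar (X Y Z H : VF) :
    D.g (D.Pstar X Y Z) H =
      D.g (D.Rm X Y Z) H - (1 / ((D.n : ℝ) - 1)) * (D.g X H * D.SM Y Z - D.g Y H * D.SM X Z) := by
  simp only [Pstar, map_sub, map_smul, LinearMap.sub_apply, LinearMap.smul_apply, smul_eq_mul]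
  ring

theorem SM_eq_RicHum_of_N_eq_zero (hN : D.N = 0) {X Y : VF} (hX : D.basic X) (hY : D.basic Y) :
    D.SM X Y = D.RicHum X Y := by
  simp only [D.ricci_hh X Y hX hY, RicHum, D.covN_zero hN, map_zero, LinearMap.zero_apply]
  ring

theorem SM_eq_RicVum_of_N_eq_zero (hN : D.N = 0) {U V : VF} (hU : D.vertical U)
    (hV : D.vertical V) : D.SM U V = D.RicVum U V := by
  simp only [D.ricci_vv U V hU hV, RicVum, hN, map_zero, LinearMap.zero_apply, sub_zero]

end OneillSetup

open OneillSetup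

/-- the Weyl projective curvature tensor when the fibres are totally
umbilical with vanishing mean curvature field (`N = 0`). -/
theorem weylProjective_umbilical {VF : Type*} [AddCommGroup VF] [Module ℝ VF]
    (D : OneillSetup VF) (hN : D.N = 0) (X Y Z H U V W F : VF)
    (hX : D.basic X) (hY : D.basic Y) (hZ : D.basic Z) (hH : D.basic H)
    (hU : D.vertical U) (hV : D.vertical V) (hW : D.vertical W) (hF : D.vertical F) :
    D.g (D.Pstar X Y Z) H =
      D.RG X Y Z H + 2 * D.g (D.A X Y) (D.A Z H)
        - D.g (D.A Y Z) (D.A X H) + D.g (D.A X Z) (D.A Y H)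
      - (1 / ((D.n : ℝ) - 1)) *
        (D.g X H * (D.SG Y Z
            - 2 * (∑ i, D.g (D.A Y (D.Xi i)) (D.A Z (D.Xi i)))
            - ∑ j, D.g (D.T (D.Uj j) Y) (D.T (D.Uj j) Z))
         - D.g Y H * (D.SG X Z
            - 2 * (∑ i, D.g (D.A X (D.Xi i)) (D.A Z (D.Xi i)))
            - ∑ j, D.g (D.T (D.Uj j) X) (D.T (D.Uj j) Z))) ∧
    D.g (D.Pstar U V W) F =
      D.Rhat U V W F + D.g (D.T U W) (D.T V F) - D.g (D.T V W) (D.T U F)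
      - (1 / ((D.n : ℝ) - 1)) *
        (D.g F U * (D.Shat V W
            + ∑ i, (D.g (D.covT (D.Xi i) V W) (D.Xi i)
                + D.g (D.A (D.Xi i) V) (D.A (D.Xi i) W)))
         - D.g F V * (D.Shat U W
            + ∑ i, (D.g (D.covT (D.Xi i) U W) (D.Xi i)
                + D.g (D.A (D.Xi i) U) (D.A (D.Xi i) W)))) := by
  constructor
  · rw [g_Pstar, D.curv_hhhh X Y Z H hX hY hZ hH, D.SM_eq_RicHum_of_N_eq_zero hN hY hZ,
      D.SM_eq_RicHum_of_N_eq_zero hN hX hZ]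
    rfl
  · rw [g_Pstar, D.curv_vvvv U V W F hU hV hW hF, D.SM_eq_RicVum_of_N_eq_zero hN hV hW,
      D.SM_eq_RicVum_of_N_eq_zero hN hU hW, D.g_symm U F, D.g_symm V F]
    rfl
end

section
/- For all vertical vector fields U, V, W, F on M, the conharmonic curvature tensor satisfies: L*(U,V,W,F) = g(R̂(U,V)W, F) + g(T_U W, T_V F) − g(T_V W, T_U F) − (1/(n−2)) { g(V,W)·Ric_v(U,F) − g(U,W)·Ric_v(V,F) + g(U,F)·Ric_v(V,W) − g(V,F)·Ric_v(U,W) }, where for vertical E, F one abbreviates Ric_v(E,F) = Ŝ(E,F) − g(N, T_E F) + Σ_i ( g((∇_{X_i}T)_E F, X_i) + g(A_{X_i}E, A_{X_i}F) ). -/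
open OneillSetup

namespace OneillSetup

variable {VF : Type*} [AddCommGroup VF] [Module ℝ VF]

theorem SM_eq_RicV (D : OneillSetup VF) {E F : VF} (hE : D.vertical E) (hF : D.vertical F) :
    D.SM E F = D.RicV E F :=
  D.ricci_vv E F hE hF

end OneillSetup

/-- the conharmonic curvature tensor on vertical fields. -/
theorem conharmonic_vertical {VF : Type*} [AddCommGroup VF] [Module ℝ VF]
    (D : OneillSetup VF) (U V W F : VF)
    (hU : D.vertical U) (hV : D.vertical V) (hW : D.vertical W) (hF : D.vertical F) :
    D.Lstar U V W F =
      D.Rhat U V W F + D.g (D.T U W) (D.T V F) - D.g (D.T V W) (D.T U F)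
      - (1 / ((D.n : ℝ) - 2)) *
        (D.g V W * D.RicV U F - D.g U W * D.RicV V F
          + D.g U F * D.RicV V W - D.g V F * D.RicV U W) := by
  rw [Lstar, D.curv_vvvv U V W F hU hV hW hF, D.SM_eq_RicV hU hF, D.SM_eq_RicV hV hF,
    D.SM_eq_RicV hV hW, D.SM_eq_RicV hU hW]
end

section
/- Suppose the fibres of the Riemannian submersion are totally umbilical with vanishing mean curvature field, i.e. N = 0. Then for all vertical vector fields U, V, W, F on M: L*(U,V,W,F) = g(R̂(U,V)W, F) + g(T_U W, T_V F) − g(T_V W, T_U F) − (1/(n−2)) { g(V,W)·Ric_v(U,F) − g(U,W)·Ric_v(V,F) + g(U,F)·Ric_v(V,W) − g(V,F)·Ric_v(U,W) }, where for vertical E, F one abbreviates Ric_v(E,F) = Ŝ(E,F) + Σ_i ( g((∇_{X_i}T)_E F, X_i) + g(A_{X_i}E, A_{X_i}F) ). -/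
namespace OneillSetup

variable {VF : Type*} [AddCommGroup VF] [Module ℝ VF] (D : OneillSetup VF) {U V W F : VF}

theorem SM_eq_RicV_s11 (hU : D.vertical U) (hV : D.vertical V) : D.SM U V = D.RicV U V :=
  D.ricci_vv U V hU hV

theorem RicV_eq_RicVum (hN : D.N = 0) (U V : VF) : D.RicV U V = D.RicVum U V := by
  simp only [RicV, RicVum, hN, LinearMap.map_zero₂, sub_zero]

theorem Lstar_vertical (hU : D.vertical U) (hV : D.vertical V) (hW : D.vertical W)
    (hF : D.vertical F) :
    D.Lstar U V W F =
      D.Rhat U V W F + D.g (D.T U W) (D.T V F) - D.g (D.T V W) (D.T U F)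
      - (1 / ((D.n : ℝ) - 2)) *
        (D.g V W * D.RicV U F - D.g U W * D.RicV V F
          + D.g U F * D.RicV V W - D.g V F * D.RicV U W) := by
  rw [Lstar, D.curv_vvvv U V W F hU hV hW hF, D.SM_eq_RicV_s11 hU hF, D.SM_eq_RicV_s11 hV hF,
    D.SM_eq_RicV_s11 hV hW, D.SM_eq_RicV_s11 hU hW]

end OneillSetup

open OneillSetup

/-- the conharmonic curvature tensor on vertical fields when the fibres are
totally umbilical with vanishing mean curvature field (`N = 0`). -/
theorem conharmonic_vertical_umbilical {VF : Type*} [AddCommGroup VF] [Module ℝ VF]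
    (D : OneillSetup VF) (hN : D.N = 0) (U V W F : VF)
    (hU : D.vertical U) (hV : D.vertical V) (hW : D.vertical W) (hF : D.vertical F) :
    D.Lstar U V W F =
      D.Rhat U V W F + D.g (D.T U W) (D.T V F) - D.g (D.T V W) (D.T U F)
      - (1 / ((D.n : ℝ) - 2)) *
        (D.g V W * D.RicVum U F - D.g U W * D.RicVum V F
          + D.g U F * D.RicVum V W - D.g V F * D.RicVum U W) := by
  simp only [D.Lstar_vertical hU hV hW hF, D.RicV_eq_RicVum hN]
end

section
/- For all vertical vector fields U, V, W and every horizontal vector field X on M, the M-projective curvature tensor satisfies: g(W*(U,V)W, X) = g((∇_U T)_V W, X) − g((∇_V T)_U W, X) − (1/(2(n−1))) { g(V,W)·Ric_m(U,X) − g(U,W)·Ric_m(V,X) }, where for vertical E and horizontal X one abbreviates Ric_m(E,X) = g(∇_E N, X) − Σ_j g((∇_{U_j}T)_{U_j}E, X) + Σ_i ( g((∇_{X_i}A)_{X_i}X, E) − 2 g(A_X X_i, T_E X_i) ). -/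
open OneillSetup

namespace OneillSetup

variable {VF : Type*} [AddCommGroup VF] [Module ℝ VF] (D : OneillSetup VF)

theorem g_Wstar_apply (X Y Z H : VF) :
    D.g (D.Wstar X Y Z) H =
      D.g (D.Rm X Y Z) H - (1 / (2 * ((D.n : ℝ) - 1))) *
        (D.SM Y Z * D.g X H - D.SM X Z * D.g Y H
          + D.g Y Z * D.SM X H - D.g X Z * D.SM Y H) := by
  simp only [Wstar, map_sub, map_add, map_smul, LinearMap.sub_apply, LinearMap.add_apply,
    LinearMap.smul_apply, smul_eq_mul, ← Q_def]

variable {D}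

theorem g_vertical_horizontal {U X : VF} (hU : D.vertical U) (hX : D.horizontal X) :
    D.g U X = 0 := by
  rw [D.g_symm]
  exact D.g_hv X U hX hU

theorem SM_vertical_horizontal {U X : VF} (hU : D.vertical U) (hX : D.horizontal X) :
    D.SM U X = D.RicM U X :=
  D.ricci_vh U X hU hX

end OneillSetup

/-- the M-projective curvature tensor on three vertical fields and a
horizontal field. -/
theorem mProjective_vvvh {VF : Type*} [AddCommGroup VF] [Module ℝ VF]
    (D : OneillSetup VF) (U V W X : VF)
    (hU : D.vertical U) (hV : D.vertical V) (hW : D.vertical W)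
    (hX : D.horizontal X) :
    D.g (D.Wstar U V W) X =
      D.g (D.covT U V W) X - D.g (D.covT V U W) X
      - (1 / (2 * ((D.n : ℝ) - 1))) *
        (D.g V W * D.RicM U X - D.g U W * D.RicM V X) := by
  rw [D.g_Wstar_apply, D.curv_vvvh U V W X hU hV hW hX,
    D.g_vertical_horizontal hU hX, D.g_vertical_horizontal hV hX,
    D.SM_vertical_horizontal hU hX, D.SM_vertical_horizontal hV hX]
  ring
end
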